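/- In a finite T0 topological space X, the furtherness satisfies Ψ(x,y) = |U_y \ U_x| for all x, y ∈ X, where U_x and U_y are the minimal open sets containing x and y respectively. -/

import Mathlib

open Set Topology

/-- The minimal open set containing `x`: the intersection of all open sets containing `x`. -/
def minOpen (X : Type*) [TopologicalSpace X] (x : X) : Set X :=
  ⋂₀ {U : Set X | IsOpen U ∧ x ∈ U}

/-- A nested sequence of open sets around `x`: a sequence of open sets starting at the
minimal open set of `x`, increasing, strictly increasing until it reaches the whole space
(after which it is stationary), with no open set strictly between consecutive terms. -/
def NestedSeq (X : Type*) [TopologicalSpace X] (x : X) (c : ℕ → Set X) : Prop :=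
  c 0 = minOpen X x ∧ (∀ j, IsOpen (c j)) ∧
  (∀ j, c j ⊆ c (j + 1)) ∧
  (∀ j, c j ≠ c (j + 1) ∨ c j = Set.univ) ∧
  (∀ j, ∀ V : Set X, IsOpen V → c j ⊆ V → V ⊆ c (j + 1) → V = c j ∨ V = c (j + 1))

/-- The furtherness `Ψ(x,y)`: the least `k` such that `y` belongs to the `k`-th term of
some nested sequence of open sets around `x`. -/
noncomputable def furth (X : Type*) [TopologicalSpace X] (x y : X) : ℕ :=
  sInf {k | ∃ c : ℕ → Set X, NestedSeq X x c ∧ y ∈ c k}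

set_option linter.unusedSectionVars false

section aux
variable {X : Type*} [TopologicalSpace X] [Finite X]

lemma minOpen_isOpen (x : X) : IsOpen (minOpen X x) := by
  apply Set.Finite.isOpen_sInter (Set.toFinite _)
  intro s hs; exact hs.1

lemma mem_minOpen (x : X) : x ∈ minOpen X x := by
  intro s hs; exact hs.2

lemma minOpen_subset {x : X} {U : Set X} (hU : IsOpen U) (hx : x ∈ U) : minOpen X x ⊆ U :=
  Set.sInter_subset_of_mem ⟨hU, hx⟩

lemma minOpen_mono {z w : X} (h : w ∈ minOpen X z) : minOpen X w ⊆ minOpen X z :=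
  minOpen_subset (minOpen_isOpen z) h

lemma minOpen_inj [T0Space X] {z w : X} (h : minOpen X w = minOpen X z) : w = z := by
  apply Inseparable.eq
  rw [inseparable_iff_forall_isOpen]
  intro s hs
  constructor
  · intro hw
    have hsub := minOpen_subset hs hw
    rw [h] at hsub
    exact hsub (mem_minOpen z)
  · intro hz
    have hsub := minOpen_subset hs hz
    rw [← h] at hsub
    exact hsub (mem_minOpen w)

lemma exists_step [T0Space X] {V T : Set X} (hV : IsOpen V) (hT : IsOpen T)
    (hne : (T \ V).Nonempty) :
    ∃ z ∈ T \ V, IsOpen (V ∪ {z}) := by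
  obtain ⟨z, hz, hmin⟩ := Set.Finite.exists_minimalFor (fun w => minOpen X w) (T \ V)
    (Set.toFinite _) hne
  refine ⟨z, hz, ?_⟩
  have heq : V ∪ {z} = V ∪ minOpen X z := by
    apply Set.Subset.antisymm
    · exact Set.union_subset_union_right _ (by simpa using mem_minOpen z)
    · rintro w (hw | hw)
      · exact Or.inl hw
      · by_cases hwV : w ∈ V
        · exact Or.inl hwV
        · have hwT : w ∈ T := minOpen_subset hT hz.1 hw
          have := (hmin ⟨hwT, hwV⟩ (minOpen_mono hw)).antisymm (minOpen_mono hw)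
          exact Or.inr (by simp [minOpen_inj this.symm])
  rw [heq]
  exact hV.union (minOpen_isOpen z)

lemma cover_diff [T0Space X] {V W : Set X} (hV : IsOpen V) (hW : IsOpen W) (hVW : V ⊆ W)
    (hne : V ≠ W)
    (hcov : ∀ U : Set X, IsOpen U → V ⊆ U → U ⊆ W → U = V ∨ U = W) :
    ∃ z, W = V ∪ {z} := by
  have hne' : (W \ V).Nonempty := by
    rw [Set.diff_nonempty]
    intro h
    exact hne (Set.Subset.antisymm hVW h)
  obtain ⟨z, hz, hop⟩ := exists_step hV hW hne'
  refine ⟨z, ?_⟩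
  rcases hcov (V ∪ {z}) hop Set.subset_union_left
      (Set.union_subset hVW (by simpa using hz.1)) with h | h
  · exact absurd (h ▸ (Set.mem_union_right V rfl : z ∈ V ∪ {z})) hz.2
  · exact h.symm

lemma step_exists [T0Space X] (y : X) {V : Set X} (hV : IsOpen V) (hne : V ≠ Set.univ) :
    ∃ z, z ∉ V ∧ IsOpen (V ∪ {z}) ∧ (¬ minOpen X y ⊆ V → z ∈ minOpen X y) := by
  by_cases hsub : minOpen X y ⊆ V
  · obtain ⟨z, hz, hop⟩ := exists_step hV isOpen_univ
      (by rw [Set.diff_nonempty]; simpa [Set.univ_subset_iff] using hne)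
    exact ⟨z, hz.2, hop, fun h => absurd hsub h⟩
  · obtain ⟨z, hz, hop⟩ := exists_step (T := V ∪ minOpen X y) hV
      (hV.union (minOpen_isOpen y))
      (by rw [Set.diff_nonempty]; intro h; exact hsub (Set.subset_union_right.trans h |>.trans (fun _ => id)))
    have hzy : z ∈ minOpen X y := by
      rcases hz.1 with h | h
      · exact absurd h hz.2
      · exact h
    exact ⟨z, hz.2, hop, fun _ => hzy⟩

open Classical in
noncomputable def stepSet (X : Type*) [TopologicalSpace X] [Finite X] [T0Space X]
    (y : X) (V : Set X) : Set X :=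
  if h : IsOpen V ∧ V ≠ Set.univ then
    V ∪ {Classical.choose (step_exists y h.1 h.2)}
  else V

variable [T0Space X] (y : X)

lemma stepSet_subset (V : Set X) : V ⊆ stepSet X y V := by
  unfold stepSet
  split <;> simp

lemma stepSet_isOpen {V : Set X} (hV : IsOpen V) : IsOpen (stepSet X y V) := by
  unfold stepSet
  split
  · next h => exact (Classical.choose_spec (step_exists y h.1 h.2)).2.1
  · exact hV

lemma stepSet_ne {V : Set X} (hV : IsOpen V) (h : V ≠ Set.univ) : stepSet X y V ≠ V := by
  unfold stepSet
  rw [dif_pos ⟨hV, h⟩]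
  intro heq
  have h1 := (Classical.choose_spec (step_exists y hV h)).1
  exact h1 (heq.subset (Set.mem_union_right V rfl))

lemma stepSet_singleton {V : Set X} : ∃ z, stepSet X y V ⊆ V ∪ {z} := by
  unfold stepSet
  split
  · exact ⟨_, le_refl _⟩
  · exact ⟨y, Set.subset_union_left⟩

lemma stepSet_progress {V : Set X} (hV : IsOpen V) (h : ¬ minOpen X y ⊆ V) :
    ∃ z ∈ minOpen X y \ V, stepSet X y V = V ∪ {z} := by
  have hne : V ≠ Set.univ := by
    intro heq; exact h (heq ▸ Set.subset_univ _)
  unfold stepSet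
  rw [dif_pos ⟨hV, hne⟩]
  obtain ⟨h1, h2, h3⟩ := Classical.choose_spec (step_exists y hV hne)
  exact ⟨_, ⟨h3 h, h1⟩, rfl⟩

end aux

theorem stmt8 (X : Type*) [TopologicalSpace X] [Finite X] [T0Space X] (x y : X) :
    furth X x y = (minOpen X y \ minOpen X x).ncard := by
  set n := (minOpen X y \ minOpen X x).ncard with hn
  -- the constructed sequence
  set c : ℕ → Set X := fun j => (stepSet X y)^[j] (minOpen X x) with hc
  have hc0 : c 0 = minOpen X x := rfl
  have hcs : ∀ j, c (j + 1) = stepSet X y (c j) := by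
    intro j
    simp only [hc, Function.iterate_succ_apply']
  have hopen : ∀ j, IsOpen (c j) := by
    intro j
    induction j with
    | zero => exact minOpen_isOpen x
    | succ j ih => rw [hcs]; exact stepSet_isOpen y ih
  have hmono : ∀ j, c j ⊆ c (j + 1) := fun j => (hcs j) ▸ stepSet_subset y (c j)
  have hnested : NestedSeq X x c := by
    refine ⟨hc0, hopen, hmono, ?_, ?_⟩
    · intro j
      by_cases hu : c j = Set.univ
      · exact Or.inr hu
      · exact Or.inl fun h => stepSet_ne y (hopen j) hu ((hcs j) ▸ h.symm)
    · intro j V hV h1 h2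
      obtain ⟨z, hz⟩ := stepSet_singleton (X := X) y (V := c j)
      rw [← hcs j] at hz
      by_cases hzV : z ∈ V
      · refine Or.inr (Set.Subset.antisymm h2 ?_)
        refine hz.trans (Set.union_subset h1 ?_)
        simpa using hzV
      · refine Or.inl (Set.Subset.antisymm ?_ h1)
        intro w hw
        rcases hz (h2 hw) with h | h
        · exact h
        · exact absurd (h ▸ hzV) (by simp_all)
  -- y ∈ c n
  have hcard : ∀ j, (minOpen X y \ c j).ncard ≤ n - j := by
    intro j
    induction j with
    | zero => simp [hc0, hn]
    | succ j ih =>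
      by_cases hs : minOpen X y ⊆ c j
      · have : minOpen X y \ c (j + 1) = ∅ := by
          rw [Set.diff_eq_empty]
          exact hs.trans (hmono j)
        simp [this]
      · obtain ⟨z, hz, heq⟩ := stepSet_progress y (hopen j) hs
        rw [← hcs j] at heq
        have hdiff : minOpen X y \ c (j + 1) = (minOpen X y \ c j) \ {z} := by
          rw [heq, ← Set.diff_diff]
        rw [hdiff, Set.ncard_diff_singleton_of_mem hz]
        omega
  have hyn : y ∈ c n := by
    have h0 := hcard n
    simp only [Nat.sub_self, Nat.le_zero] at h0
    have hempty : minOpen X y \ c n = ∅ := by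
      rwa [Set.ncard_eq_zero (Set.toFinite _)] at h0
    rw [Set.diff_eq_empty] at hempty
    exact hempty (mem_minOpen y)
  have hmem : n ∈ {k | ∃ c : ℕ → Set X, NestedSeq X x c ∧ y ∈ c k} := ⟨c, hnested, hyn⟩
  refine le_antisymm (Nat.sInf_le hmem) (le_csInf ⟨n, hmem⟩ ?_)
  rintro k ⟨d, ⟨hd0, hdop, hdmono, hdne, hdcov⟩, hdy⟩
  have hclaim : ∀ j, (d j \ d 0).ncard ≤ j := by
    intro j
    induction j with
    | zero => simp
    | succ j ih =>
      by_cases he : d j = d (j + 1)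
      · rw [← he]; exact ih.trans (Nat.le_succ j)
      · obtain ⟨z, heq⟩ := cover_diff (hdop j) (hdop (j + 1)) (hdmono j) he
          (fun U hU h1 h2 => hdcov j U hU h1 h2)
        have hsub2 : d (j + 1) \ d 0 ⊆ (d j \ d 0) ∪ {z} := by
          rw [heq, Set.union_diff_distrib]
          exact Set.union_subset_union_right _ Set.diff_subset
        calc (d (j + 1) \ d 0).ncard ≤ ((d j \ d 0) ∪ {z}).ncard :=
              Set.ncard_le_ncard hsub2 (Set.toFinite _)
          _ ≤ (d j \ d 0).ncard + ({z} : Set X).ncard := Set.ncard_union_le _ _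
          _ ≤ j + 1 := by simpa using ih
  have hsubk : minOpen X y \ minOpen X x ⊆ d k \ d 0 := by
    rw [hd0]
    exact Set.diff_subset_diff_left (minOpen_subset (hdop k) hdy)
  calc n ≤ (d k \ d 0).ncard := Set.ncard_le_ncard hsubk (Set.toFinite _)
    _ ≤ k := hclaim k
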